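/- Let h ∈ L²(Ω). If u is a weak subsolution of L_K u + V u = h in Ω, v is a weak supersolution of L_K v + V v = h in Ω, and u ≤ v a.e. on ℝⁿ \ Ω, then u ≤ v a.e. on ℝⁿ (comparison principle). -/

import Mathlib

/-! Test both inequalities with `w = (u - v)⁺`. It is admissible: it vanishes outside `Ω`, and its
Gagliardo and `V`-energies are bounded by those of `u` and `v`. Subtracting, the pointwise
inequality `(a - b)(a⁺ - b⁺) ≥ (a⁺ - b⁺)²` and `V (u - v) w = V w² ≥ 0` force the `K`-energy of `w`
over `ℝ^{2n}_Ω` to vanish. As `K > 0` off the diagonal, `w x = w y` for a.e. `(x, y) ∈ Ω × Ωᶜ`, and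
`w = 0` on `Ωᶜ`, which has positive measure because `Ω` is bounded; hence `w = 0` a.e. -/

open MeasureTheory Real Filter
open scoped ENNReal RealInnerProductSpace

noncomputable section

/-- Euclidean space ℝⁿ. -/
abbrev En (n : ℕ) := EuclideanSpace ℝ (Fin n)

/-- The squared Gagliardo seminorm `[u]_s²`. -/
def gagliardoSq (n : ℕ) (s : ℝ) (u : En n → ℝ) : ℝ≥0∞ :=
  ∫⁻ p : En n × En n,
    ENNReal.ofReal ((u p.1 - u p.2) ^ 2 * ‖p.1 - p.2‖ ^ (-((n : ℝ) + 2 * s)))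

/-- `K` is a symmetric measurable kernel comparable to `c⬝|y|^{-(n+2s)}`
with ellipticity constants `lam ≤ Lam`. -/
def IsKernel (n : ℕ) (s lam Lam c : ℝ) (K : En n → ℝ) : Prop :=
  Measurable K ∧ (∀ y : En n, K (-y) = K y) ∧
    ∀ y : En n, y ≠ 0 →
      lam * c * ‖y‖ ^ (-((n : ℝ) + 2 * s)) ≤ K y ∧
        K y ≤ Lam * c * ‖y‖ ^ (-((n : ℝ) + 2 * s))

/-- The nonlocal operator `L_K` applied to a test function. -/
def LK (n : ℕ) (K φ : En n → ℝ) (x : En n) : ℝ :=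
  (1 / 2) * ∫ y : En n, (2 * φ x - φ (x + y) - φ (x - y)) * K y

/-- `V ∈ L^q_loc(ℝⁿ)`. -/
def LocLq (n : ℕ) (q : ℝ) (V : En n → ℝ) : Prop :=
  ∀ A : Set (En n), IsCompact A → MemLp V (ENNReal.ofReal q) (volume.restrict A)

/-- The space `X^s_0(Ω)`: measurable functions vanishing a.e. outside `Ω`
with finite Gagliardo seminorm. -/
def Xs0 (n : ℕ) (s : ℝ) (Ω : Set (En n)) : Set (En n → ℝ) :=
  {u | Measurable u ∧ (∀ᵐ x : En n ∂volume, x ∉ Ω → u x = 0) ∧ gagliardoSq n s u < ⊤}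

/-- `∫_Ω V u²`. -/
def VIntSq (n : ℕ) (V : En n → ℝ) (Ω : Set (En n)) (u : En n → ℝ) : ℝ≥0∞ :=
  ∫⁻ x in Ω, ENNReal.ofReal (V x * u x ^ 2)

/-- The space `Y^s_0(Ω) = X^s_0(Ω) ∩ L²_V(Ω)`. -/
def Ys0 (n : ℕ) (s : ℝ) (Ω : Set (En n)) (V : En n → ℝ) : Set (En n → ℝ) :=
  {u | u ∈ Xs0 n s Ω ∧ VIntSq n V Ω u < ⊤}

/-- The squared `Y^s_0(Ω)` norm: `[u]_s² + ∫_Ω V u²`. -/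
def YnormSq (n : ℕ) (s : ℝ) (Ω : Set (En n)) (V : En n → ℝ) (u : En n → ℝ) : ℝ≥0∞ :=
  gagliardoSq n s u + VIntSq n V Ω u

/-- The kernel quadratic form `∬ (u(x)-u(y))² K(x-y) dx dy` (as an `ℝ≥0∞`-integral). -/
def kerSq (n : ℕ) (K : En n → ℝ) (u : En n → ℝ) : ℝ≥0∞ :=
  ∫⁻ p : En n × En n, ENNReal.ofReal ((u p.1 - u p.2) ^ 2 * K (p.1 - p.2))

/-- The bilinear form `(1/2)∬ (u(x)-u(y))(φ(x)-φ(y)) K(x-y) dx dy`. -/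
def bilin (n : ℕ) (K : En n → ℝ) (u φ : En n → ℝ) : ℝ :=
  (1 / 2) * ∫ p : En n × En n, (u p.1 - u p.2) * (φ p.1 - φ p.2) * K (p.1 - p.2)

/-- The energy functional `E_V`. -/
def energy (n : ℕ) (K V f : En n → ℝ) (Ω : Set (En n)) (v : En n → ℝ) : ℝ :=
  (1 / 2) * (kerSq n K v).toReal + (VIntSq n V Ω v).toReal - 2 * ∫ x in Ω, f x * v x

/-- The region `ℝ^{2n}_Ω = (ℝⁿ×ℝⁿ) \ (Ωᶜ×Ωᶜ)`. -/
def R2n (n : ℕ) (Ω : Set (En n)) : Set (En n × En n) := (Ωᶜ ×ˢ Ωᶜ)ᶜ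

/-- The squared Gagliardo seminorm restricted to `ℝ^{2n}_Ω`. -/
def gagliardoSqOn (n : ℕ) (s : ℝ) (Ω : Set (En n)) (u : En n → ℝ) : ℝ≥0∞ :=
  ∫⁻ p in R2n n Ω,
    ENNReal.ofReal ((u p.1 - u p.2) ^ 2 * ‖p.1 - p.2‖ ^ (-((n : ℝ) + 2 * s)))

/-- The kernel quadratic form restricted to `ℝ^{2n}_Ω`. -/
def kerSqOn (n : ℕ) (Ω : Set (En n)) (K : En n → ℝ) (u : En n → ℝ) : ℝ≥0∞ :=
  ∫⁻ p in R2n n Ω, ENNReal.ofReal ((u p.1 - u p.2) ^ 2 * K (p.1 - p.2))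

/-- The bilinear form restricted to `ℝ^{2n}_Ω`. -/
def bilinOn (n : ℕ) (Ω : Set (En n)) (K : En n → ℝ) (u φ : En n → ℝ) : ℝ :=
  (1 / 2) * ∫ p in R2n n Ω, (u p.1 - u p.2) * (φ p.1 - φ p.2) * K (p.1 - p.2)

/-- The energy functional `E_V` with the double integral over `ℝ^{2n}_Ω`. -/
def energyOn (n : ℕ) (Ω : Set (En n)) (K V f : En n → ℝ) (v : En n → ℝ) : ℝ :=
  (1 / 2) * (kerSqOn n Ω K v).toReal + (VIntSq n V Ω v).toReal - 2 * ∫ x in Ω, f x * v x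


lemma sq_max_sub_max_le_mul (a b : ℝ) :
    (max a 0 - max b 0) ^ 2 ≤ (a - b) * (max a 0 - max b 0) := by
  rcases le_total a 0 with ha | ha <;> rcases le_total b 0 with hb | hb <;>
    simp only [max_eq_left, max_eq_right, ha, hb] <;> nlinarith

lemma sq_max_sub_sub_max_sub_le (a b c d : ℝ) :
    (max (a - b) 0 - max (c - d) 0) ^ 2 ≤ 2 * (a - c) ^ 2 + 2 * (b - d) ^ 2 := by
  obtain ⟨h₁, h₂⟩ := abs_le.mp (abs_max_sub_max_le_abs (a - b) (c - d) 0)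
  nlinarith [sq_le_sq' h₁ h₂, sq_abs (a - b - (c - d)), sq_nonneg (a - c + (b - d))]

section WeightedSquares

variable {α : Type*} [MeasurableSpace α] {μ : Measure α}

lemma lintegral_ofReal_sq_mul_lt_top_of_sq_le {f g₁ g₂ W : α → ℝ} (hg₁ : AEMeasurable g₁ μ)
    (hW : AEMeasurable W μ) (hW₀ : 0 ≤ᵐ[μ] W) (hf : ∀ x, f x ^ 2 ≤ 2 * g₁ x ^ 2 + 2 * g₂ x ^ 2)
    (h₁ : ∫⁻ x, ENNReal.ofReal (g₁ x ^ 2 * W x) ∂μ < ⊤)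
    (h₂ : ∫⁻ x, ENNReal.ofReal (g₂ x ^ 2 * W x) ∂μ < ⊤) :
    ∫⁻ x, ENNReal.ofReal (f x ^ 2 * W x) ∂μ < ⊤ := by
  have hle : ∫⁻ x, ENNReal.ofReal (f x ^ 2 * W x) ∂μ ≤
      ∫⁻ x, (2 * ENNReal.ofReal (g₁ x ^ 2 * W x) + 2 * ENNReal.ofReal (g₂ x ^ 2 * W x)) ∂μ := by
    refine lintegral_mono_ae ?_
    filter_upwards [hW₀] with x hx
    calc ENNReal.ofReal (f x ^ 2 * W x)
        ≤ ENNReal.ofReal (2 * (g₁ x ^ 2 * W x) + 2 * (g₂ x ^ 2 * W x)) := by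
          gcongr
          nlinarith [mul_le_mul_of_nonneg_right (hf x) hx]
      _ ≤ _ := by
          refine ENNReal.ofReal_add_le.trans_eq ?_
          rw [ENNReal.ofReal_mul zero_le_two, ENNReal.ofReal_mul zero_le_two, ENNReal.ofReal_ofNat]
  refine hle.trans_lt ?_
  rw [lintegral_add_left' (by fun_prop), lintegral_const_mul' _ _ ENNReal.ofNat_ne_top,
    lintegral_const_mul' _ _ ENNReal.ofNat_ne_top]
  exact ENNReal.add_lt_top.mpr ⟨ENNReal.mul_lt_top (by simp) h₁, ENNReal.mul_lt_top (by simp) h₂⟩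

lemma integrable_sq_mul_of_lintegral_lt_top {f W : α → ℝ} (hf : AEStronglyMeasurable f μ)
    (hW : AEStronglyMeasurable W μ) (hW₀ : 0 ≤ᵐ[μ] W)
    (h : ∫⁻ x, ENNReal.ofReal (f x ^ 2 * W x) ∂μ < ⊤) :
    Integrable (fun x => f x ^ 2 * W x) μ := by
  refine ⟨by fun_prop, (hasFiniteIntegral_iff_ofReal ?_).mpr h⟩
  filter_upwards [hW₀] with x hx
  exact mul_nonneg (sq_nonneg _) hx

lemma integrable_mul_mul_of_lintegral_sq_lt_top {f g W : α → ℝ} (hf : AEStronglyMeasurable f μ)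
    (hg : AEStronglyMeasurable g μ) (hW : AEStronglyMeasurable W μ) (hW₀ : 0 ≤ᵐ[μ] W)
    (hfW : ∫⁻ x, ENNReal.ofReal (f x ^ 2 * W x) ∂μ < ⊤)
    (hgW : ∫⁻ x, ENNReal.ofReal (g x ^ 2 * W x) ∂μ < ⊤) :
    Integrable (fun x => f x * g x * W x) μ := by
  refine ((integrable_sq_mul_of_lintegral_lt_top hf hW hW₀ hfW).add
    (integrable_sq_mul_of_lintegral_lt_top hg hW hW₀ hgW)).mono' (by fun_prop) ?_
  filter_upwards [hW₀] with x hx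
  rw [Real.norm_eq_abs, abs_mul, abs_mul, abs_of_nonneg hx, Pi.add_apply, ← sq_abs (f x),
    ← sq_abs (g x), ← add_mul]
  exact mul_le_mul_of_nonneg_right (by nlinarith [sq_nonneg (|f x| - |g x|)]) hx

lemma ae_eq_zero_of_lintegral_sq_mul_eq_zero {f W : α → ℝ} (hf : AEMeasurable f μ)
    (hW : AEMeasurable W μ) (hW₀ : ∀ᵐ x ∂μ, 0 < W x)
    (h : ∫⁻ x, ENNReal.ofReal (f x ^ 2 * W x) ∂μ = 0) : f =ᵐ[μ] 0 := by
  filter_upwards [(lintegral_eq_zero_iff' (by fun_prop)).mp h, hW₀] with x hx hWx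
  have hsq : f x ^ 2 ≤ 0 := nonpos_of_mul_nonpos_left (ENNReal.ofReal_eq_zero.mp hx) hWx
  exact pow_eq_zero_iff two_ne_zero |>.mp (le_antisymm hsq (sq_nonneg _))

end WeightedSquares

section ProductMeasure

variable {α : Type*} [MeasurableSpace α] {μ ν : Measure α}

lemma ae_prod_fst_ne_snd [MeasurableEq α] [SFinite ν] [NullSingletonClass ν] :
    ∀ᵐ p ∂μ.prod ν, p.1 ≠ p.2 := by
  simp only [ae_iff, ne_eq, not_not]
  refine (Measure.measure_prod_null measurableSet_diagonal).mpr
    (Eventually.of_forall fun x => ?_)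
  have : Prod.mk x ⁻¹' Set.diagonal α = {x} := by ext y; simp [eq_comm]
  simp [this]

lemma ae_eq_zero_of_ae_prod_eq [SFinite ν] [(ae ν).NeBot] {w : α → ℝ}
    (h : ∀ᵐ p ∂μ.prod ν, w p.1 = w p.2) (h₀ : ∀ᵐ y ∂ν, w y = 0) : ∀ᵐ x ∂μ, w x = 0 := by
  filter_upwards [Measure.ae_ae_of_ae_prod h] with x hx
  obtain ⟨y, hxy, hy⟩ := (hx.and h₀).exists
  exact hxy.trans hy

end ProductMeasure

lemma measure_compl_ne_zero_of_isBounded {E : Type*} [NormedAddCommGroup E] [NormedSpace ℝ E]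
    [FiniteDimensional ℝ E] [Nontrivial E] [MeasurableSpace E] [BorelSpace E] (μ : Measure E)
    [μ.IsAddHaarMeasure] {Ω : Set E} (hΩ : Bornology.IsBounded Ω) : μ Ωᶜ ≠ 0 := by
  intro h
  have huniv : μ Set.univ ≤ μ Ω + μ Ωᶜ := by
    rw [← Set.union_compl_self Ω]
    exact measure_union_le _ _
  rw [measure_univ_of_isAddLeftInvariant, h, add_zero] at huniv
  exact hΩ.measure_lt_top.not_ge huniv

section Kernel

variable {n : ℕ} {s lam Lam c : ℝ} {K : En n → ℝ}

lemma IsKernel.pos (hK : IsKernel n s lam Lam c K) (hlam : 0 < lam) (hc : 0 < c) {y : En n}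
    (hy : y ≠ 0) : 0 < K y :=
  (mul_pos (mul_pos hlam hc) (Real.rpow_pos_of_pos (norm_pos_iff.mpr hy) _)).trans_le
    (hK.2.2 y hy).1

lemma IsKernel.ae_pos_sub [Nontrivial (En n)] (hK : IsKernel n s lam Lam c K) (hlam : 0 < lam)
    (hc : 0 < c) : ∀ᵐ p : En n × En n, 0 < K (p.1 - p.2) := by
  rw [Measure.volume_eq_prod]
  filter_upwards [ae_prod_fst_ne_snd] with p hp
  exact hK.pos hlam hc (sub_ne_zero.mpr hp)

lemma IsKernel.kerSqOn_lt_top (hK : IsKernel n s lam Lam c K) (hLc : 0 ≤ Lam * c)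
    {Ω : Set (En n)} {g : En n → ℝ} (hg : gagliardoSqOn n s Ω g < ⊤) :
    kerSqOn n Ω K g < ⊤ := by
  have hle : kerSqOn n Ω K g ≤ ENNReal.ofReal (Lam * c) * gagliardoSqOn n s Ω g := by
    rw [kerSqOn, gagliardoSqOn, ← lintegral_const_mul' _ _ ENNReal.ofReal_ne_top]
    refine lintegral_mono fun p => ?_
    rw [← ENNReal.ofReal_mul hLc]
    refine ENNReal.ofReal_le_ofReal ?_
    rcases eq_or_ne p.1 p.2 with hp | hp
    · simp [hp]
    · have := mul_le_mul_of_nonneg_left (hK.2.2 _ (sub_ne_zero.mpr hp)).2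
        (sq_nonneg (g p.1 - g p.2))
      linarith
  exact hle.trans_lt (ENNReal.mul_lt_top ENNReal.ofReal_lt_top hg)

end Kernel

section Comparison

variable {n : ℕ} {s : ℝ} {Ω : Set (En n)} {K V u v : En n → ℝ}

lemma gagliardoSq_eq_gagliardoSqOn (hΩ : MeasurableSet Ω) {w : En n → ℝ}
    (hw : ∀ᵐ x, x ∉ Ω → w x = 0) : gagliardoSq n s w = gagliardoSqOn n s Ω w := by
  have hout : ∀ᵐ x ∂volume.restrict Ωᶜ, w x = 0 := (ae_restrict_iff' hΩ.compl).mpr hw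
  have hzero : ∀ᵐ p ∂(volume : Measure (En n × En n)).restrict (Ωᶜ ×ˢ Ωᶜ),
      ENNReal.ofReal ((w p.1 - w p.2) ^ 2 * ‖p.1 - p.2‖ ^ (-((n : ℝ) + 2 * s))) = 0 := by
    rw [Measure.volume_eq_prod, ← Measure.prod_restrict]
    filter_upwards [Measure.quasiMeasurePreserving_fst.ae hout,
      Measure.quasiMeasurePreserving_snd.ae hout] with p h₁ h₂
    simp [h₁, h₂]
  rw [gagliardoSq, gagliardoSqOn, R2n, ← lintegral_add_compl _ (hΩ.compl.prod hΩ.compl),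
    lintegral_congr_ae hzero, lintegral_zero, zero_add]

lemma posPart_sub_mem_Ys0 (hΩ : MeasurableSet Ω) (hV : Measurable V) (hV₀ : ∀ x, 0 ≤ V x)
    (hu : Measurable u) (hv : Measurable v) (hu_g : gagliardoSqOn n s Ω u < ⊤)
    (hv_g : gagliardoSqOn n s Ω v < ⊤) (hu_V : VIntSq n V Ω u < ⊤) (hv_V : VIntSq n V Ω v < ⊤)
    (hbd : ∀ᵐ x, x ∉ Ω → u x ≤ v x) : (fun x => max (u x - v x) 0) ∈ Ys0 n s Ω V := by
  have hw₀ : ∀ᵐ x, x ∉ Ω → max (u x - v x) 0 = 0 := by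
    filter_upwards [hbd] with x hx hxΩ
    exact max_eq_right (sub_nonpos.mpr (hx hxΩ))
  refine ⟨⟨by fun_prop, hw₀, ?_⟩, ?_⟩
  · rw [gagliardoSq_eq_gagliardoSqOn hΩ hw₀]
    rw [gagliardoSqOn] at hu_g hv_g ⊢
    exact lintegral_ofReal_sq_mul_lt_top_of_sq_le (by fun_prop) (by fun_prop)
      (ae_of_all _ fun p => by positivity) (fun p => sq_max_sub_sub_max_sub_le _ _ _ _) hu_g hv_g
  · simp only [VIntSq, mul_comm (V _)] at hu_V hv_V ⊢
    exact lintegral_ofReal_sq_mul_lt_top_of_sq_le hu.aemeasurable hV.aemeasurable (ae_of_all _ hV₀)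
      (fun x => by simpa using sq_max_sub_sub_max_sub_le (u x) (v x) 0 0) hu_V hv_V

lemma kerSqOn_posPart_sub_lt_top (hK : Measurable K) (hK₀ : ∀ᵐ p : En n × En n, 0 ≤ K (p.1 - p.2))
    (hu : Measurable u) (hu_K : kerSqOn n Ω K u < ⊤) (hv_K : kerSqOn n Ω K v < ⊤) :
    kerSqOn n Ω K (fun x => max (u x - v x) 0) < ⊤ := by
  rw [kerSqOn] at hu_K hv_K ⊢
  exact lintegral_ofReal_sq_mul_lt_top_of_sq_le (by fun_prop) (by fun_prop) (ae_restrict_of_ae hK₀)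
    (fun p => sq_max_sub_sub_max_sub_le _ _ _ _) hu_K hv_K

lemma half_kerSqOn_posPart_sub_le (hK : Measurable K)
    (hK₀ : ∀ᵐ p : En n × En n, 0 ≤ K (p.1 - p.2)) (hu : Measurable u) (hv : Measurable v)
    (hu_K : kerSqOn n Ω K u < ⊤) (hv_K : kerSqOn n Ω K v < ⊤) :
    1 / 2 * (kerSqOn n Ω K (fun x => max (u x - v x) 0)).toReal ≤
      bilinOn n Ω K u (fun x => max (u x - v x) 0) -
        bilinOn n Ω K v (fun x => max (u x - v x) 0) := by
  set w : En n → ℝ := fun x => max (u x - v x) 0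
  have hKm : Measurable fun p : En n × En n => K (p.1 - p.2) := hK.comp (by fun_prop)
  have hK₀' := ae_restrict_of_ae (s := R2n n Ω) hK₀
  have hw_K := kerSqOn_posPart_sub_lt_top hK hK₀ hu hu_K hv_K
  have hint : ∀ g : En n → ℝ, Measurable g → kerSqOn n Ω K g < ⊤ →
      Integrable (fun p => (g p.1 - g p.2) * (w p.1 - w p.2) * K (p.1 - p.2))
        (volume.restrict (R2n n Ω)) := fun g hg hg_K =>
    integrable_mul_mul_of_lintegral_sq_lt_top (by fun_prop) (by fun_prop)
      hKm.aestronglyMeasurable hK₀' hg_K hw_K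
  have hker : (kerSqOn n Ω K w).toReal =
      ∫ p in R2n n Ω, (w p.1 - w p.2) ^ 2 * K (p.1 - p.2) := by
    rw [integral_eq_lintegral_of_nonneg_ae (by filter_upwards [hK₀'] with p hp; positivity)
      (by fun_prop), kerSqOn]
  rw [bilinOn, bilinOn, ← mul_sub, ← integral_sub (hint u hu hu_K) (hint v hv hv_K), hker]
  gcongr 1 / 2 * ?_
  refine integral_mono_ae (integrable_sq_mul_of_lintegral_lt_top (by fun_prop)
    hKm.aestronglyMeasurable hK₀' hw_K) ((hint u hu hu_K).sub (hint v hv hv_K)) ?_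
  filter_upwards [hK₀'] with p hp
  have := mul_le_mul_of_nonneg_right (sq_max_sub_max_le_mul (u p.1 - v p.1) (u p.2 - v p.2)) hp
  simp only [w]
  linarith

lemma setIntegral_mul_posPart_sub_le (hV : Measurable V) (hV₀ : ∀ x, 0 ≤ V x)
    (hu : Measurable u) (hv : Measurable v) (hu_V : VIntSq n V Ω u < ⊤) (hv_V : VIntSq n V Ω v < ⊤)
    (hw_V : VIntSq n V Ω (fun x => max (u x - v x) 0) < ⊤) :
    ∫ x in Ω, V x * v x * max (u x - v x) 0 ≤ ∫ x in Ω, V x * u x * max (u x - v x) 0 := by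
  simp only [VIntSq, mul_comm (V _)] at hu_V hv_V hw_V
  have hint : ∀ g : En n → ℝ, Measurable g → ∫⁻ x in Ω, ENNReal.ofReal (g x ^ 2 * V x) < ⊤ →
      Integrable (fun x => V x * g x * max (u x - v x) 0) (volume.restrict Ω) := fun g hg hg_V =>
    (integrable_mul_mul_of_lintegral_sq_lt_top (by fun_prop) (by fun_prop) (by fun_prop)
      (ae_of_all _ hV₀) hg_V hw_V).congr (ae_of_all _ fun x => by ring)
  refine integral_mono (hint v hv hv_V) (hint u hu hu_V) fun x => ?_
  have : v x * max (u x - v x) 0 ≤ u x * max (u x - v x) 0 := by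
    rcases le_total (u x - v x) 0 with h | h
    · simp [max_eq_right h]
    · rw [max_eq_left h]; nlinarith
  simpa only [mul_assoc] using mul_le_mul_of_nonneg_left this (hV₀ x)

lemma ae_eq_zero_of_kerSqOn_eq_zero [Nontrivial (En n)] (hΩ : MeasurableSet Ω)
    (hΩb : Bornology.IsBounded Ω) (hK : Measurable K)
    (hKpos : ∀ᵐ p : En n × En n, 0 < K (p.1 - p.2))
    {w : En n → ℝ} (hw : Measurable w) (hw₀ : ∀ᵐ x, x ∉ Ω → w x = 0)
    (h : kerSqOn n Ω K w = 0) : ∀ᵐ x, w x = 0 := by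
  have hKm : Measurable fun p : En n × En n => K (p.1 - p.2) := hK.comp (by fun_prop)
  have hdiff : ∀ᵐ p ∂volume.restrict (R2n n Ω), w p.1 - w p.2 = 0 :=
    ae_eq_zero_of_lintegral_sq_mul_eq_zero (by fun_prop) (by fun_prop) (ae_restrict_of_ae hKpos) h
  have hprod : ∀ᵐ p ∂(volume.restrict Ω).prod (volume.restrict Ωᶜ), w p.1 = w p.2 := by
    rw [Measure.prod_restrict, ← Measure.volume_eq_prod]
    have hsub : Ω ×ˢ Ωᶜ ⊆ R2n n Ω := fun p hp hc => hc.1 hp.1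
    filter_upwards [ae_restrict_of_ae_restrict_of_subset hsub hdiff] with p hp
    exact sub_eq_zero.mp hp
  have : (ae (volume.restrict Ωᶜ)).NeBot := ae_neBot.mpr fun h =>
    measure_compl_ne_zero_of_isBounded volume hΩb (Measure.restrict_eq_zero.mp h)
  have hin := ae_eq_zero_of_ae_prod_eq hprod ((ae_restrict_iff' hΩ.compl).mpr hw₀)
  filter_upwards [(ae_restrict_iff' hΩ).mp hin, hw₀] with x hin hout
  by_cases hx : x ∈ Ω
  · exact hin hx
  · exact hout hx

end Comparison

/-- comparison principle: if `u` is a weak subsolution and `v`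
a weak supersolution of `L_K w + V w = h` in `Ω` with `u ≤ v` a.e. outside `Ω`,
then `u ≤ v` a.e. on `ℝⁿ`. -/
theorem stmt10 (n : ℕ) (hn : 2 ≤ n) (s : ℝ)
    (c lam Lam : ℝ) (hlam : 0 < lam) (hlamLam : lam ≤ Lam) (hc : 0 < c)
    (K : En n → ℝ) (hK : IsKernel n s lam Lam c K)
    (V : En n → ℝ) (hVmeas : Measurable V) (hV0 : ∀ x, 0 ≤ V x)
    (Ω : Set (En n)) (hΩo : IsOpen Ω) (hΩb : Bornology.IsBounded Ω)
    (h : En n → ℝ)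
    (u : En n → ℝ) (hu_meas : Measurable u)
    (hu_g : gagliardoSqOn n s Ω u < ⊤)
    (hu_V : VIntSq n V Ω u < ⊤)
    (v : En n → ℝ) (hv_meas : Measurable v)
    (hv_g : gagliardoSqOn n s Ω v < ⊤)
    (hv_V : VIntSq n V Ω v < ⊤)
    (hsub : ∀ φ ∈ Ys0 n s Ω V, (∀ x, 0 ≤ φ x) →
      bilinOn n Ω K u φ + ∫ x in Ω, V x * u x * φ x ≤ ∫ x in Ω, h x * φ x)
    (hsuper : ∀ φ ∈ Ys0 n s Ω V, (∀ x, 0 ≤ φ x) →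
      ∫ x in Ω, h x * φ x ≤ bilinOn n Ω K v φ + ∫ x in Ω, V x * v x * φ x)
    (hbd : ∀ᵐ x : En n ∂volume, x ∉ Ω → u x ≤ v x) :
    ∀ᵐ x : En n ∂volume, u x ≤ v x := by
  have : Nonempty (Fin n) := ⟨⟨0, by omega⟩⟩
  have hΩ := hΩo.measurableSet
  set w : En n → ℝ := fun x => max (u x - v x) 0
  have hwY : w ∈ Ys0 n s Ω V :=
    posPart_sub_mem_Ys0 hΩ hVmeas hV0 hu_meas hv_meas hu_g hv_g hu_V hv_V hbd
  have hKpos := hK.ae_pos_sub hlam hc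
  have hK₀ := hKpos.mono fun _ => le_of_lt
  have hLc : 0 ≤ Lam * c := (mul_pos (hlam.trans_le hlamLam) hc).le
  have hu_K := hK.kerSqOn_lt_top hLc hu_g
  have hv_K := hK.kerSqOn_lt_top hLc hv_g
  have hker : kerSqOn n Ω K w = 0 := by
    have hbilin := half_kerSqOn_posPart_sub_le hK.1 hK₀ hu_meas hv_meas hu_K hv_K
    have hpot := setIntegral_mul_posPart_sub_le hVmeas hV0 hu_meas hv_meas hu_V hv_V hwY.2
    have hw₀ : ∀ x, 0 ≤ w x := fun _ => le_max_right _ _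
    have htest := (hsub w hwY hw₀).trans (hsuper w hwY hw₀)
    refine (ENNReal.toReal_eq_zero_iff _).mp (le_antisymm ?_ ENNReal.toReal_nonneg)
      |>.resolve_right (kerSqOn_posPart_sub_lt_top hK.1 hK₀ hu_meas hu_K hv_K).ne
    linarith
  filter_upwards [ae_eq_zero_of_kerSqOn_eq_zero hΩ hΩb hK.1 hKpos (by fun_prop) hwY.1.2.1 hker]
    with x hx
  exact sub_nonpos.mp (max_eq_right_iff.mp hx)
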